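/- arXiv:1502.01092 — 3 statements merged into one kernel-verified Lean document; each statement's English description precedes it below -/
import Mathlib

section
/- Let u = u_K be a solution of the ODE with u(0) = 1, u'(0⁺) = 0, and suppose u(t) > 0 for all t ≥ 0 and u'(t) ≤ 0 for all t > 0 (case (a)). Then lim_{t→∞} u(t) = 0. -/
open Real Filter Topology Set

noncomputable section

/-- `u` is a solution of the ODE `u'' + ((n−1)/t)·u' + (C·φ(t) − K)·u = 0` on `(0,∞)`,
continuous on `[0,∞)`, C² on `(0,∞)`, with `u(0) = 1` and `u'(t) → 0` as `t → 0⁺`. -/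
def ODESol (n : ℕ) (C K : ℝ) (φ u : ℝ → ℝ) : Prop :=
  ContinuousOn u (Ici 0) ∧ ContDiffOn ℝ 2 u (Ioi 0) ∧ u 0 = 1 ∧
  Tendsto (deriv u) (𝓝[>] (0 : ℝ)) (𝓝 0) ∧
  ∀ t : ℝ, 0 < t →
    deriv (deriv u) t + (((n : ℝ) - 1) / t) * deriv u t + (C * φ t - K) * u t = 0

/-- Hypotheses on the potential `φ`: C¹ on `[0,∞)`, positive on `[0,∞)`,
with `φ' < 0` on `(0,∞)`, and `φ(t) → 0` as `t → ∞`. -/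
def PhiHyp (φ : ℝ → ℝ) : Prop :=
  ContDiffOn ℝ 1 φ (Ici 0) ∧ (∀ t : ℝ, 0 ≤ t → 0 < φ t) ∧
  (∀ t : ℝ, 0 < t → deriv φ t < 0) ∧ Tendsto φ atTop (𝓝 0)

/-! Since `u` is positive and nonincreasing, it converges to some `L ≥ 0`. If `L > 0`, then for
large `t` the potential satisfies `C φ(t) < K / 2` and the damping term `((n-1)/t) u'` is `≤ 0`,
so the ODE gives `u'' ≥ K L / 2`. Hence `u' → ∞`, contradicting `u' ≤ 0`. -/

theorem AntitoneOn.exists_tendsto_atTop_of_bddBelow {α β : Type*} [LinearOrder α]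
    [ConditionallyCompleteLinearOrder β] [TopologicalSpace β] [OrderTopology β]
    {f : α → β} {a : α} (hf : AntitoneOn f (Ici a)) (hbdd : BddBelow (f '' Ici a)) :
    ∃ L, Tendsto f atTop (𝓝 L) ∧ ∀ t ∈ Ici a, L ≤ f t := by
  set g : α → β := fun t => f (max t a)
  have hg : Antitone g := fun x y hxy =>
    hf (le_max_right x a) (le_max_right y a) (max_le_max_right a hxy)
  have hgbdd : BddBelow (range g) :=
    hbdd.mono (range_subset_iff.2 fun t => mem_image_of_mem f (le_max_right t a))
  have hfg : ∀ t ∈ Ici a, g t = f t := fun t ht => by simp only [g, max_eq_left ht]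
  refine ⟨⨅ t, g t, ?_, fun t ht => hfg t ht ▸ ciInf_le hgbdd t⟩
  refine (tendsto_atTop_ciInf hg hgbdd).congr' ?_
  filter_upwards [eventually_ge_atTop a] with t ht using hfg t ht

theorem tendsto_atTop_of_le_deriv {f : ℝ → ℝ} {a c : ℝ} (hc : 0 < c)
    (hf : DifferentiableOn ℝ f (Ici a)) (hf' : ∀ x ∈ Ioi a, c ≤ deriv f x) :
    Tendsto f atTop atTop := by
  have hlin : ∀ t ∈ Ici a, f a + c * (t - a) ≤ f t := fun t ht => by
    have := (convex_Ici a).mul_sub_le_image_sub_of_le_deriv hf.continuousOn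
      (hf.mono interior_subset) (by simpa only [interior_Ici] using hf') a self_mem_Ici t ht ht
    linarith
  refine tendsto_atTop_mono' _ (eventually_ge_atTop a |>.mono hlin) ?_
  exact tendsto_atTop_add_const_left _ _
    ((tendsto_atTop_add_const_right _ _ tendsto_id).const_mul_atTop hc)

theorem eventually_le_deriv_deriv {n : ℕ} (hn : 1 ≤ n) {C K L : ℝ} (hK : 0 < K) (hL : 0 ≤ L)
    {φ u : ℝ → ℝ} (hφ : Tendsto φ atTop (𝓝 0))
    (hode : ∀ t : ℝ, 0 < t →
      deriv (deriv u) t + (((n : ℝ) - 1) / t) * deriv u t + (C * φ t - K) * u t = 0)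
    (hLu : ∀ᶠ t in atTop, L ≤ u t) (hdec : ∀ᶠ t in atTop, deriv u t ≤ 0) :
    ∀ᶠ t in atTop, K / 2 * L ≤ deriv (deriv u) t := by
  have hCφ : ∀ᶠ t in atTop, C * φ t < K / 2 := by
    have hCφ0 : Tendsto (fun t => C * φ t) atTop (𝓝 0) := by
      simpa only [mul_zero] using hφ.const_mul C
    exact hCφ0.eventually (gt_mem_nhds (half_pos hK))
  filter_upwards [hCφ, hLu, hdec, eventually_gt_atTop 0] with t hCφt hLt hdect ht
  have hcoef : 0 ≤ ((n : ℝ) - 1) / t :=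
    div_nonneg (sub_nonneg.2 (by exact_mod_cast hn)) ht.le
  have hdamp : ((n : ℝ) - 1) / t * deriv u t ≤ 0 := mul_nonpos_of_nonneg_of_nonpos hcoef hdect
  nlinarith [hode t ht]

theorem ODE_case_a_decay_general {n : ℕ} (hn : 2 ≤ n) (C K : ℝ) (hK : 0 < K)
    (φ : ℝ → ℝ) (hφ : PhiHyp φ)
    (u : ℝ → ℝ) (hu : ODESol n C K φ u)
    (hpos : ∀ t : ℝ, 0 ≤ t → 0 < u t)
    (hdec : ∀ t : ℝ, 0 < t → deriv u t ≤ 0) :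
    Tendsto u atTop (𝓝 0) := by
  obtain ⟨hcont, hC2, -, -, hode⟩ := hu
  have hanti : AntitoneOn u (Ici 0) :=
    antitoneOn_of_deriv_nonpos (convex_Ici 0) hcont
      (by simpa only [interior_Ici] using hC2.differentiableOn two_ne_zero)
      (by rw [interior_Ici]; exact hdec)
  obtain ⟨L, hlim, hLu⟩ := hanti.exists_tendsto_atTop_of_bddBelow
    ⟨0, forall_mem_image.2 fun t ht => (hpos t ht).le⟩
  have hL0 : 0 ≤ L :=
    ge_of_tendsto hlim (eventually_ge_atTop 0 |>.mono fun t ht => (hpos t ht).le)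
  obtain rfl | hL := hL0.eq_or_lt
  · exact hlim
  exfalso
  have hu'' := eventually_le_deriv_deriv (by omega) hK hL0 hφ.2.2.2 hode
    (eventually_ge_atTop 0 |>.mono hLu) (eventually_gt_atTop 0 |>.mono hdec)
  obtain ⟨T, hT⟩ := (hu''.and (eventually_gt_atTop 0)).exists_forall_of_atTop
  have hdu : DifferentiableOn ℝ (deriv u) (Ici T) :=
    ((hC2.deriv_of_isOpen isOpen_Ioi (by norm_num)).differentiableOn one_ne_zero).mono
      fun t ht => (hT T le_rfl).2.trans_le ht
  have hdu_top := tendsto_atTop_of_le_deriv (by positivity) hdu fun t ht => (hT t ht.le).1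
  obtain ⟨t, hdut, htT⟩ := ((hdu_top.eventually_gt_atTop 0).and (eventually_ge_atTop T)).exists
  exact (hdec t ((hT T le_rfl).2.trans_le htT)).not_gt hdut

/-- decay in case (a).
If `u = u_K` solves the ODE with `u(0) = 1`, `u'(0⁺) = 0`, stays positive on `[0,∞)` and
has `u' ≤ 0` on `(0,∞)`, then `u(t) → 0` as `t → ∞`. -/
theorem ODE_case_a_decay {n : ℕ} (hn : 2 ≤ n) (C K : ℝ) (hC : 0 < C) (hK : 0 < K)
    (φ : ℝ → ℝ) (hφ : PhiHyp φ)
    (u : ℝ → ℝ) (hu : ODESol n C K φ u)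
    (hpos : ∀ t : ℝ, 0 ≤ t → 0 < u t)
    (hdec : ∀ t : ℝ, 0 < t → deriv u t ≤ 0) :
    Tendsto u atTop (𝓝 0) :=
  ODE_case_a_decay_general hn C K hK φ hφ u hu hpos hdec
end
end

section
/- Let 0 < K₁ < K₂, let u₁ be a solution of the ODE with constant K₁ and u₂ a solution with constant K₂, both with initial conditions u(0) = 1, u'(0⁺) = 0. If t₀ > 0 is such that u₁ > 0 and u₂ > 0 on [0, t₀), then for all t ∈ (0, t₀) one has u₁'(t)/u₁(t) < u₂'(t)/u₂(t). -/
open Real Filter Topology Set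

noncomputable section

/-! The weighted Wronskian `W = t^(n-1) (u₂' u₁ - u₁' u₂)` satisfies
`W' = t^(n-1) (K₂ - K₁) u₁ u₂`, since the weight cancels the first-order terms and the potential
`C φ` cancels between the two equations. Hence `W` is increasing while both solutions are
positive, and `W(0⁺) = 0` by the initial conditions, so `W > 0` on `(0, t₀)`; dividing by
`t^(n-1) u₁ u₂` gives the comparison of logarithmic derivatives. -/

theorem pos_of_tendsto_nhdsGT_of_hasDerivAt_pos {f f' : ℝ → ℝ} {a b : ℝ}
    (hlim : Tendsto f (𝓝[>] a) (𝓝 0)) (hf : ∀ x ∈ Ioo a b, HasDerivAt f (f' x) x)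
    (hf' : ∀ x ∈ Ioo a b, 0 < f' x) : ∀ x ∈ Ioo a b, 0 < f x := by
  have hmono : StrictMonoOn f (Ioo a b) := by
    refine strictMonoOn_of_deriv_pos (convex_Ioo a b)
      (fun x hx => (hf x hx).continuousAt.continuousWithinAt) fun x hx => ?_
    rw [interior_Ioo] at hx
    exact (hf x hx).deriv ▸ hf' x hx
  rintro x ⟨hax, hxb⟩
  have hc : (a + x) / 2 ∈ Ioo a b := ⟨by linarith, by linarith⟩
  have hc_nonneg : 0 ≤ f ((a + x) / 2) := by
    refine le_of_tendsto hlim ?_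
    filter_upwards [Ioo_mem_nhdsGT hc.1] with s hs
    exact hmono.monotoneOn ⟨hs.1, hs.2.trans hc.2⟩ hc hs.2.le
  exact hc_nonneg.trans_lt (hmono hc ⟨hax, hxb⟩ (by linarith))

def weightedWronskian (k : ℕ) (u₁ u₂ : ℝ → ℝ) (t : ℝ) : ℝ :=
  t ^ k * (deriv u₂ t * u₁ t - deriv u₁ t * u₂ t)

namespace ODESol

variable {n : ℕ} {C K K₁ K₂ : ℝ} {φ u u₁ u₂ : ℝ → ℝ} {t : ℝ}

theorem hasDerivAt (hu : ODESol n C K φ u) (ht : 0 < t) : HasDerivAt u (deriv u t) t :=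
  ((hu.2.1.differentiableOn two_ne_zero).differentiableAt (Ioi_mem_nhds ht)).hasDerivAt

theorem hasDerivAt_deriv (hu : ODESol n C K φ u) (ht : 0 < t) :
    HasDerivAt (deriv u) (deriv (deriv u) t) t :=
  (((hu.2.1.deriv_of_isOpen isOpen_Ioi (by norm_num : (1 : WithTop ℕ∞) + 1 ≤ 2)).differentiableOn
    one_ne_zero).differentiableAt (Ioi_mem_nhds ht)).hasDerivAt

theorem tendsto_nhdsGT_zero (hu : ODESol n C K φ u) : Tendsto u (𝓝[>] 0) (𝓝 1) :=
  hu.2.2.1 ▸ (hu.1.continuousWithinAt self_mem_Ici).mono Ioi_subset_Ici_self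

theorem hasDerivAt_weightedWronskian (hn : 1 ≤ n) (hu₁ : ODESol n C K₁ φ u₁)
    (hu₂ : ODESol n C K₂ φ u₂) (ht : 0 < t) :
    HasDerivAt (weightedWronskian (n - 1) u₁ u₂) (t ^ (n - 1) * ((K₂ - K₁) * u₁ t * u₂ t)) t := by
  obtain ⟨k, rfl⟩ : ∃ k, n = k + 1 := ⟨n - 1, by omega⟩
  have hode₁ := hu₁.2.2.2.2 t ht
  have hode₂ := hu₂.2.2.2.2 t ht
  push_cast at hode₁ hode₂
  rw [add_sub_cancel_right] at hode₁ hode₂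
  refine ((hasDerivAt_pow k t).mul (((hu₂.hasDerivAt_deriv ht).mul (hu₁.hasDerivAt ht)).sub
    ((hu₁.hasDerivAt_deriv ht).mul (hu₂.hasDerivAt ht)))).congr_deriv ?_
  simp only [Nat.add_sub_cancel, Pi.mul_apply, Pi.sub_apply]
  have hdd₁ : deriv (deriv u₁) t = -(k / t * deriv u₁ t) - (C * φ t - K₁) * u₁ t := by linarith
  have hdd₂ : deriv (deriv u₂) t = -(k / t * deriv u₂ t) - (C * φ t - K₂) * u₂ t := by linarith
  have hpow : (k : ℝ) * t ^ (k - 1) = k / t * t ^ k := by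
    rcases k with _ | k
    · simp
    · field_simp
      rw [Nat.add_sub_cancel, pow_succ]
  rw [hdd₁, hdd₂, hpow]
  ring

theorem tendsto_weightedWronskian (k : ℕ) (hu₁ : ODESol n C K₁ φ u₁) (hu₂ : ODESol n C K₂ φ u₂) :
    Tendsto (weightedWronskian k u₁ u₂) (𝓝[>] 0) (𝓝 0) := by
  have hpow : Tendsto (fun t : ℝ => t ^ k) (𝓝[>] 0) (𝓝 (0 ^ k)) :=
    ((continuous_pow k).tendsto 0).mono_left nhdsWithin_le_nhds
  unfold weightedWronskian
  simpa using hpow.mul ((hu₂.2.2.2.1.mul hu₁.tendsto_nhdsGT_zero).sub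
    (hu₁.2.2.2.1.mul hu₂.tendsto_nhdsGT_zero))

end ODESol

theorem ODE_sturm_comparison_general {n : ℕ} (hn : 2 ≤ n) (C K₁ K₂ : ℝ)
    (hK : K₁ < K₂)
    (φ : ℝ → ℝ)
    (u₁ u₂ : ℝ → ℝ) (hu₁ : ODESol n C K₁ φ u₁) (hu₂ : ODESol n C K₂ φ u₂)
    (t₀ : ℝ)
    (hpos : ∀ t : ℝ, 0 ≤ t → t < t₀ → 0 < u₁ t ∧ 0 < u₂ t) :
    ∀ t : ℝ, 0 < t → t < t₀ → deriv u₁ t / u₁ t < deriv u₂ t / u₂ t := by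
  have hW : ∀ t ∈ Ioo 0 t₀, 0 < weightedWronskian (n - 1) u₁ u₂ t :=
    pos_of_tendsto_nhdsGT_of_hasDerivAt_pos (hu₁.tendsto_weightedWronskian _ hu₂)
      (fun t ht => hu₁.hasDerivAt_weightedWronskian (by omega) hu₂ ht.1) fun t ⟨ht, htt₀⟩ =>
        have ⟨h₁, h₂⟩ := hpos t ht.le htt₀
        mul_pos (pow_pos ht _) (mul_pos (mul_pos (sub_pos.mpr hK) h₁) h₂)
  intro t ht htt₀
  obtain ⟨h₁, h₂⟩ := hpos t ht.le htt₀
  rw [div_lt_div_iff₀ h₁ h₂, ← sub_pos]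
  exact pos_of_mul_pos_right (hW t ⟨ht, htt₀⟩) (pow_pos ht _).le

/-- Sturm comparison.
If `0 < K₁ < K₂`, `u₁` solves the ODE with constant `K₁` and `u₂` with constant `K₂`
(both with `u(0) = 1`, `u'(0⁺) = 0`), and both are positive on `[0, t₀)`, then
`u₁'(t)/u₁(t) < u₂'(t)/u₂(t)` for all `t ∈ (0, t₀)`. -/
theorem ODE_sturm_comparison {n : ℕ} (hn : 2 ≤ n) (C K₁ K₂ : ℝ) (hC : 0 < C)
    (hK₁ : 0 < K₁) (hK : K₁ < K₂)
    (φ : ℝ → ℝ) (hφ : PhiHyp φ)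
    (u₁ u₂ : ℝ → ℝ) (hu₁ : ODESol n C K₁ φ u₁) (hu₂ : ODESol n C K₂ φ u₂)
    (t₀ : ℝ) (ht₀ : 0 < t₀)
    (hpos : ∀ t : ℝ, 0 ≤ t → t < t₀ → 0 < u₁ t ∧ 0 < u₂ t) :
    ∀ t : ℝ, 0 < t → t < t₀ → deriv u₁ t / u₁ t < deriv u₂ t / u₂ t :=
  ODE_sturm_comparison_general hn C K₁ K₂ hK φ u₁ u₂ hu₁ hu₂ t₀ hpos
end
end

section
/- Let 0 < K₁ < K₂ with K₂ < C·φ(0), let u₁ be a solution of the ODE with constant K₁ and u₂ a solution with constant K₂, both with initial conditions u(0) = 1, u'(0⁺) = 0. Then: (i) if u₁ is positive on [0,∞) and attains a local minimum at some t > 0 (case (c)), then u₂ is also positive on [0,∞) and attains a local minimum at some t > 0 (case (c)); (ii) if u₂ vanishes at some t > 0 (case (b)), then u₁ also vanishes at some t > 0; (iii) if u₂ is positive on [0,∞) and strictly decreasing on (0,∞) (case (a)), then u₁ vanishes at some t > 0. -/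
open Real Filter Topology Set

noncomputable section

namespace ODEcmp

variable {n : ℕ} {C K K₁ K₂ : ℝ} {φ u u₁ u₂ : ℝ → ℝ}

lemma sol_hasDerivAt (h : ODESol n C K φ u) {t : ℝ} (ht : 0 < t) :
    HasDerivAt u (deriv u t) t :=
  ((h.2.1.contDiffAt (isOpen_Ioi.mem_nhds ht)).differentiableAt two_ne_zero).hasDerivAt

lemma sol_deriv_contDiffOn (h : ODESol n C K φ u) :
    ContDiffOn ℝ 1 (deriv u) (Ioi 0) :=
  h.2.1.deriv_of_isOpen isOpen_Ioi (by norm_num)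

lemma sol_hasDerivAt2 (h : ODESol n C K φ u) {t : ℝ} (ht : 0 < t) :
    HasDerivAt (deriv u) (deriv (deriv u) t) t :=
  (((sol_deriv_contDiffOn h).contDiffAt (isOpen_Ioi.mem_nhds ht)).differentiableAt
    one_ne_zero).hasDerivAt

lemma sol_cont_deriv (h : ODESol n C K φ u) : ContinuousOn (deriv u) (Ioi 0) :=
  fun t ht => (sol_hasDerivAt2 h ht).continuousAt.continuousWithinAt

lemma sol_ode (h : ODESol n C K φ u) {t : ℝ} (ht : 0 < t) :
    deriv (deriv u) t = -((((n : ℝ)) - 1) / t) * deriv u t - (C * φ t - K) * u t := by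
  have := h.2.2.2.2 t ht; linarith

lemma sol_pos (h : ODESol n C K φ u) (hne : ∀ t, 0 < t → u t ≠ 0) :
    ∀ t, 0 ≤ t → 0 < u t := by
  intro t ht
  rcases eq_or_lt_of_le ht with rfl | ht'
  · simp [h.2.2.1]
  by_contra hle
  push_neg at hle
  have h0 : u t < 0 := lt_of_le_of_ne hle (hne t ht')
  have hc : ContinuousOn u (Icc 0 t) := h.1.mono Icc_subset_Ici_self
  have hmem : (0 : ℝ) ∈ Icc (u t) (u 0) := by
    rw [h.2.2.1]; constructor <;> linarith
  obtain ⟨c, hc1, hc2⟩ := intermediate_value_Icc' (le_of_lt ht') hc hmem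
  have hc0 : c ≠ 0 := by
    intro h'
    rw [h'] at hc2
    rw [h.2.2.1] at hc2
    norm_num at hc2
  exact hne c (lt_of_le_of_ne hc1.1 (Ne.symm hc0)) hc2

lemma gt_near_zero {g : ℝ → ℝ} (hc : ContinuousOn g (Ici 0)) {c : ℝ} (h0 : c < g 0) :
    ∃ η > 0, ∀ t ∈ Ico (0:ℝ) η, c < g t := by
  have hcw : ContinuousWithinAt g (Ici 0) 0 := hc 0 self_mem_Ici
  have h1 : g ⁻¹' (Ioi c) ∈ 𝓝[Ici 0] (0:ℝ) := hcw (Ioi_mem_nhds h0)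
  rw [Metric.mem_nhdsWithin_iff] at h1
  obtain ⟨ε, hε, hsub⟩ := h1
  refine ⟨ε, hε, fun t ht => ?_⟩
  have : t ∈ Metric.ball (0:ℝ) ε ∩ Ici 0 := by
    constructor
    · rw [Metric.mem_ball, Real.dist_eq, sub_zero, abs_of_nonneg ht.1]
      exact ht.2
    · exact ht.1
  exact hsub this

/-- helper: if `F' < 0` on `(0,b)` and `F → 0` at `0⁺`, then `F b < 0`. -/
lemma neg_of_deriv_neg {F G : ℝ → ℝ} {b : ℝ} (hb : 0 < b)
    (hd : ∀ t ∈ Ioc (0:ℝ) b, HasDerivAt F (G t) t)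
    (hneg : ∀ t ∈ Ioo (0:ℝ) b, G t < 0)
    (hlim : Tendsto F (𝓝[>] (0:ℝ)) (𝓝 0)) : F b < 0 := by
  have key : ∀ s t : ℝ, 0 < s → s < t → t ≤ b → F t < F s := by
    intro s t hs hst htb
    have hanti : StrictAntiOn F (Icc s t) := by
      apply strictAntiOn_of_deriv_neg (convex_Icc s t)
      · intro x hx
        exact (hd x ⟨lt_of_lt_of_le hs hx.1, le_trans hx.2 htb⟩).continuousAt.continuousWithinAt
      · intro x hx
        rw [interior_Icc] at hx
        rw [(hd x ⟨lt_trans hs hx.1, le_trans hx.2.le htb⟩).deriv]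
        exact hneg x ⟨lt_trans hs hx.1, lt_of_lt_of_le hx.2 htb⟩
    exact hanti ⟨le_rfl, hst.le⟩ ⟨hst.le, le_rfl⟩ hst
  have h1 : F b < F (b/2) := key (b/2) b (by linarith) (by linarith) le_rfl
  have h2 : F (b/2) ≤ 0 := by
    refine ge_of_tendsto hlim ?_
    filter_upwards [Ioo_mem_nhdsGT_of_mem (⟨le_rfl, by linarith⟩ : (0:ℝ) ∈ Ico (0:ℝ) (b/2))]
      with s hs
    exact (key s (b/2) hs.1 hs.2 (by linarith)).le
  linarith

lemma growth {f f' : ℝ → ℝ} {a b c : ℝ} (hab : a ≤ b)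
    (hcont : ContinuousOn f (Icc a b))
    (hd : ∀ t ∈ Ioo a b, HasDerivAt f (f' t) t)
    (hge : ∀ t ∈ Ioo a b, c ≤ f' t) :
    f a + c * (b - a) ≤ f b := by
  have hmono : MonotoneOn (fun t => f t - c * t) (Icc a b) := by
    apply monotoneOn_of_deriv_nonneg (convex_Icc a b)
    · exact hcont.sub ((continuous_const.mul continuous_id).continuousOn)
    · intro x hx
      rw [interior_Icc] at hx
      have hc' : HasDerivAt (fun t : ℝ => c * t) c x := by
        simpa using (hasDerivAt_id x).const_mul c
      exact ((hd x hx).sub hc').differentiableAt.differentiableWithinAt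
    · intro x hx
      rw [interior_Icc] at hx
      have hc' : HasDerivAt (fun t : ℝ => c * t) c x := by
        simpa using (hasDerivAt_id x).const_mul c
      rw [HasDerivAt.deriv (f := fun t => f t - c * t) ((hd x hx).sub hc')]
      have := hge x hx
      linarith
  have := hmono ⟨le_rfl, hab⟩ ⟨hab, le_rfl⟩ hab
  simp only at this
  nlinarith

lemma hasDerivAt_ratio (h : ODESol n C K φ u) {t : ℝ} (ht : 0 < t) (hut : u t ≠ 0) :
    HasDerivAt (fun s => deriv u s / u s)
      ((K - C * φ t) - (((n:ℝ) - 1)/t) * (deriv u t / u t) - (deriv u t / u t)^2) t := by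
  have h1 := sol_hasDerivAt h ht
  have h2 := sol_hasDerivAt2 h ht
  have hD : HasDerivAt (fun s => deriv u s / u s) _ t := h2.div h1 hut
  convert hD using 1
  rw [sol_ode h ht]
  field_simp
  ring


lemma wronskian_neg (hn : 2 ≤ n) (hK : K₁ < K₂)
    (hu₁ : ODESol n C K₁ φ u₁) (hu₂ : ODESol n C K₂ φ u₂)
    {b : ℝ} (hb : 0 < b)
    (h1 : ∀ t ∈ Ioo (0:ℝ) b, 0 < u₁ t) (h2 : ∀ t ∈ Ioo (0:ℝ) b, 0 < u₂ t) :
    b ^ (n-1) * (deriv u₁ b * u₂ b - u₁ b * deriv u₂ b) < 0 := by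
  apply neg_of_deriv_neg (G := fun t => t^(n-1) * ((K₁ - K₂) * (u₁ t * u₂ t))) hb
  · intro t ht
    have ht0 : 0 < t := ht.1
    have hP : HasDerivAt (fun s : ℝ => s ^ (n-1)) (((n-1 : ℕ) : ℝ) * t ^ (n-2)) t := by
      have e : n - 1 - 1 = n - 2 := by omega
      simpa [e] using hasDerivAt_pow (n-1) t
    have hW : HasDerivAt (fun s => deriv u₁ s * u₂ s - u₁ s * deriv u₂ s)
        ((deriv (deriv u₁) t * u₂ t + deriv u₁ t * deriv u₂ t)
          - (deriv u₁ t * deriv u₂ t + u₁ t * deriv (deriv u₂) t)) t :=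
      ((sol_hasDerivAt2 hu₁ ht0).mul (sol_hasDerivAt hu₂ ht0)).sub
        ((sol_hasDerivAt hu₁ ht0).mul (sol_hasDerivAt2 hu₂ ht0))
    have hF : HasDerivAt (fun s => s ^ (n-1) * (deriv u₁ s * u₂ s - u₁ s * deriv u₂ s)) _ t :=
      hP.mul hW
    convert hF using 1
    rw [sol_ode hu₁ ht0, sol_ode hu₂ ht0]
    have hcast : ((n-1 : ℕ) : ℝ) = (n:ℝ) - 1 := by
      rw [Nat.cast_sub (by omega : 1 ≤ n)]; norm_num
    have hpow : t ^ (n-1) = t^(n-2) * t := by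
      rw [← pow_succ]; congr 1; omega
    rw [hcast, hpow]
    field_simp
    ring
  · intro t ht
    have hp1 := h1 t ht
    have hp2 := h2 t ht
    have hpt : (0:ℝ) < t ^ (n-1) := pow_pos ht.1 _
    have hneg : K₁ - K₂ < 0 := by linarith
    exact mul_neg_of_pos_of_neg hpt (mul_neg_of_neg_of_pos hneg (mul_pos hp1 hp2))
  · have hpow : Tendsto (fun t : ℝ => t^(n-1)) (𝓝[>] (0:ℝ)) (𝓝 0) := by
      have h0 : ((0:ℝ))^(n-1) = 0 := by
        apply zero_pow; omega
      have := (continuous_pow (n-1)).tendsto (0:ℝ)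
      rw [h0] at this
      exact this.mono_left nhdsWithin_le_nhds
    have hc1 : Tendsto u₁ (𝓝[>] (0:ℝ)) (𝓝 1) := by
      have := hu₁.1 0 self_mem_Ici
      rw [ContinuousWithinAt, hu₁.2.2.1] at this
      exact this.mono_left (nhdsWithin_mono 0 Ioi_subset_Ici_self)
    have hc2 : Tendsto u₂ (𝓝[>] (0:ℝ)) (𝓝 1) := by
      have := hu₂.1 0 self_mem_Ici
      rw [ContinuousWithinAt, hu₂.2.2.1] at this
      exact this.mono_left (nhdsWithin_mono 0 Ioi_subset_Ici_self)
    have := hpow.mul ((hu₁.2.2.2.1.mul hc2).sub (hc1.mul hu₂.2.2.2.1))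
    simpa using this

lemma initial_decrease (hn : 2 ≤ n) (hu : ODESol n C K φ u)
    (hφc : ContinuousOn φ (Ici 0)) (hKC : K < C * φ 0) :
    ∃ η > 0, ∀ t ∈ Ioo (0:ℝ) η, deriv u t < 0 := by
  obtain ⟨η₁, hη₁, h1⟩ := gt_near_zero hu.1 (c := 0) (by rw [hu.2.2.1]; norm_num)
  obtain ⟨η₂, hη₂, h2⟩ := gt_near_zero (g := fun t => C * φ t)
    ((continuous_const.continuousOn).mul hφc) (c := K) hKC
  refine ⟨min η₁ η₂, lt_min hη₁ hη₂, ?_⟩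
  intro t ht
  have ht0 : 0 < t := ht.1
  have hG : t^(n-1) * deriv u t < 0 := by
    apply neg_of_deriv_neg (G := fun s => -(s^(n-1) * ((C * φ s - K) * u s))) ht0
    · intro s hs
      have hs0 : 0 < s := hs.1
      have hP : HasDerivAt (fun x : ℝ => x ^ (n-1)) (((n-1 : ℕ) : ℝ) * s ^ (n-2)) s := by
        have e : n - 1 - 1 = n - 2 := by omega
        simpa [e] using hasDerivAt_pow (n-1) s
      have hF : HasDerivAt (fun x => x ^ (n-1) * deriv u x) _ s := hP.mul (sol_hasDerivAt2 hu hs0)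
      convert hF using 1
      rw [sol_ode hu hs0]
      have hcast : ((n-1 : ℕ) : ℝ) = (n:ℝ) - 1 := by
        rw [Nat.cast_sub (by omega : 1 ≤ n)]; norm_num
      have hpow : s ^ (n-1) = s^(n-2) * s := by
        rw [← pow_succ]; congr 1; omega
      rw [hcast, hpow]
      field_simp
      ring
    · intro s hs
      have hs1 : s < η₁ := lt_of_lt_of_le (lt_trans hs.2 ht.2) (min_le_left _ _)
      have hs2 : s < η₂ := lt_of_lt_of_le (lt_trans hs.2 ht.2) (min_le_right _ _)
      have hu_pos := h1 s ⟨hs.1.le, hs1⟩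
      have hφ_gt := h2 s ⟨hs.1.le, hs2⟩
      have hpt : (0:ℝ) < s ^ (n-1) := pow_pos hs.1 _
      have hgt : 0 < C * φ s - K := by simpa using sub_pos.mpr hφ_gt
      exact neg_lt_zero.mpr (mul_pos hpt (mul_pos hgt hu_pos))
    · have hpow : Tendsto (fun t : ℝ => t^(n-1)) (𝓝[>] (0:ℝ)) (𝓝 0) := by
        have h0 : ((0:ℝ))^(n-1) = 0 := by apply zero_pow; omega
        have := (continuous_pow (n-1)).tendsto (0:ℝ)
        rw [h0] at this
        exact this.mono_left nhdsWithin_le_nhds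
      have := hpow.mul hu.2.2.2.1
      simpa using this
  have hpt : (0:ℝ) < t ^ (n-1) := pow_pos ht0 _
  nlinarith


lemma part2 (hn : 2 ≤ n) (hK : K₁ < K₂)
    (hu₁ : ODESol n C K₁ φ u₁) (hu₂ : ODESol n C K₂ φ u₂)
    (hz : ∃ t, 0 < t ∧ u₂ t = 0) : ∃ t, 0 < t ∧ u₁ t = 0 := by
  by_contra hno
  push_neg at hno
  have hpos1 := sol_pos hu₁ hno
  obtain ⟨η, hη, hηpos⟩ := gt_near_zero hu₂.1 (c := 0) (by rw [hu₂.2.2.1]; norm_num)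
  set Z := {t : ℝ | η ≤ t ∧ u₂ t = 0} with hZ
  have hZeq : ∀ t, 0 < t → u₂ t = 0 → η ≤ t := by
    intro t ht h0
    by_contra hlt
    push_neg at hlt
    exact (hηpos t ⟨ht.le, hlt⟩).ne' h0
  obtain ⟨t₂, ht₂, h0₂⟩ := hz
  have hZne : Z.Nonempty := ⟨t₂, hZeq t₂ ht₂ h0₂, h0₂⟩
  have hZbdd : BddBelow Z := ⟨η, fun x hx => hx.1⟩
  have hZcl : IsClosed Z := by
    have he : Z = Ici η ∩ u₂ ⁻¹' {0} := by
      ext x; simp [hZ, mem_Ici]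
    rw [he]
    exact (hu₂.1.mono (Ici_subset_Ici.mpr hη.le)).preimage_isClosed_of_isClosed
      isClosed_Ici isClosed_singleton
  set b := sInf Z with hbdef
  have hbZ : b ∈ Z := hZcl.csInf_mem hZne hZbdd
  have hbη : η ≤ b := hbZ.1
  have hb : 0 < b := lt_of_lt_of_le hη hbη
  have hub : u₂ b = 0 := hbZ.2
  have hposb : ∀ t ∈ Ioo (0:ℝ) b, 0 < u₂ t := by
    intro t ht
    by_contra hle
    push_neg at hle
    rcases eq_or_lt_of_le hle with heq | hlt
    · have : t ∈ Z := ⟨hZeq t ht.1 heq, heq⟩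
      exact absurd (csInf_le hZbdd this) (not_le.mpr ht.2)
    · have hc : ContinuousOn u₂ (Icc 0 t) := hu₂.1.mono Icc_subset_Ici_self
      have hmem : (0 : ℝ) ∈ Icc (u₂ t) (u₂ 0) := by
        rw [hu₂.2.2.1]; constructor <;> linarith
      obtain ⟨c, hc1, hc2⟩ := intermediate_value_Icc' ht.1.le hc hmem
      have hc0 : c ≠ 0 := by
        intro h'
        rw [h', hu₂.2.2.1] at hc2
        norm_num at hc2
      have hcpos : 0 < c := lt_of_le_of_ne hc1.1 (Ne.symm hc0)
      have : c ∈ Z := ⟨hZeq c hcpos hc2, hc2⟩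
      have := csInf_le hZbdd this
      have : b ≤ t := le_trans this hc1.2
      exact absurd this (not_le.mpr ht.2)
  have hW := wronskian_neg hn hK hu₁ hu₂ hb (fun t ht => hpos1 t ht.1.le) hposb
  rw [hub] at hW
  have hbpow : (0:ℝ) < b ^ (n-1) := pow_pos hb _
  have hu1b : 0 < u₁ b := hpos1 b hb.le
  have hd2b : 0 < deriv u₂ b := by
    by_contra h'
    push_neg at h'
    have h2 : 0 ≤ b ^ (n-1) * (deriv u₁ b * 0 - u₁ b * deriv u₂ b) := by
      have : 0 ≤ -(u₁ b * deriv u₂ b) := by nlinarith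
      nlinarith
    linarith
  have hslope : deriv u₂ b ≤ 0 := by
    have hD := sol_hasDerivAt hu₂ hb
    have hT := hasDerivAt_iff_tendsto_slope.mp hD
    have h2 : Tendsto (slope u₂ b) (𝓝[<] b) (𝓝 (deriv u₂ b)) :=
      hT.mono_left (nhdsWithin_mono b (fun y hy => ne_of_lt hy))
    refine le_of_tendsto h2 ?_
    filter_upwards [Ioo_mem_nhdsLT_of_mem (⟨hb, le_rfl⟩ : b ∈ Ioc (0:ℝ) b)] with y hy
    have hy2 := hposb y hy
    rw [slope_def_field, hub]
    apply div_nonpos_of_nonneg_of_nonpos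
    · linarith
    · linarith [hy.2]
  linarith


private lemma ineq1 {a δ K₁ q ρ Cφ : ℝ}
    (hquad : 0 ≤ -(ρ + a) * (4*a*K₁ - (4*K₁+δ)*ρ))
    (hlin : 0 ≤ (δ - q * (4*a)) * -ρ * a)
    (hφprod : 0 ≤ Cφ * (4*a^2))
    (hsub : 4*a^2*ρ^2 = (4*K₁+2*δ)*ρ^2) :
    δ * ρ^2 ≤ -(K₁ - Cφ - q*ρ - ρ^2) * (4*a^2) := by
  linarith only [hquad, hlin, hφprod, hsub]


set_option maxHeartbeats 2000000 in
lemma part3 (hn : 2 ≤ n) (hC : 0 < C) (hK₁ : 0 < K₁) (hK : K₁ < K₂) (hφ : PhiHyp φ)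
    (hu₁ : ODESol n C K₁ φ u₁) (hu₂ : ODESol n C K₂ φ u₂)
    (hpos2 : ∀ t, 0 ≤ t → 0 < u₂ t) (hdec2 : ∀ t, 0 < t → deriv u₂ t < 0) :
    ∃ t, 0 < t ∧ u₁ t = 0 := by
  by_contra hno
  push_neg at hno
  have hpos1 := sol_pos hu₁ hno
  set δ := K₂ - K₁ with hδdef
  have hδpos : 0 < δ := by simp only [hδdef]; linarith
  set a := Real.sqrt (K₁ + δ/2) with hadef
  have ha2 : a^2 = K₁ + δ/2 := Real.sq_sqrt (by linarith)
  have hapos : 0 < a := Real.sqrt_pos.mpr (by linarith)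
  have hev1 : ∀ᶠ t in atTop, C * φ t < δ/4 := by
    have h0 : Tendsto (fun t => C * φ t) atTop (𝓝 (C * 0)) := hφ.2.2.2.const_mul C
    rw [mul_zero] at h0
    exact h0.eventually (eventually_lt_nhds (by linarith))
  have hev2 : ∀ᶠ t : ℝ in atTop, ((n:ℝ)-1)/t < δ/(4*a) := by
    have h0 : Tendsto (fun t : ℝ => ((n:ℝ)-1)/t) atTop (𝓝 0) :=
      tendsto_const_nhds.div_atTop tendsto_id
    exact h0.eventually (eventually_lt_nhds (by positivity))
  obtain ⟨T, hT⟩ := eventually_atTop.mp ((hev1.and hev2).and (eventually_gt_atTop 0))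
  have hT0 : 0 < T := (hT T le_rfl).2
  set r₁ := fun t => deriv u₁ t / u₁ t with hr₁def
  set r₂ := fun t => deriv u₂ t / u₂ t with hr₂def
  have hr₂neg : ∀ t, 0 < t → r₂ t < 0 :=
    fun t ht => div_neg_of_neg_of_pos (hdec2 t ht) (hpos2 t ht.le)
  have hncast : (1:ℝ) ≤ (n:ℝ) := by exact_mod_cast le_trans (by norm_num) hn
  -- Step A : some point with r₂ ≤ -a
  have hstepA : ∃ t₀, T ≤ t₀ ∧ r₂ t₀ ≤ -a := by
    by_contra hcon
    push_neg at hcon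
    set T' := T + (4/δ) * (1 - r₂ T) with hT'def
    have hr₂T : r₂ T < 0 := hr₂neg T hT0
    have hTT' : T ≤ T' := by
      have h4 : 0 < (4/δ) * (1 - r₂ T) := by
        apply mul_pos (by positivity)
        linarith
      simp only [hT'def]
      linarith
    have hgrow := growth (f := r₂)
      (f' := fun t => (K₂ - C * φ t) - (((n:ℝ)-1)/t) * r₂ t - (r₂ t)^2)
      (c := δ/4) hTT'
      (fun x hx => by
        have hx0 : 0 < x := lt_of_lt_of_le hT0 hx.1
        exact (hasDerivAt_ratio hu₂ hx0 (hpos2 x hx0.le).ne').continuousAt.continuousWithinAt)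
      (fun x hx => by
        have hx0 : 0 < x := lt_trans hT0 hx.1
        exact hasDerivAt_ratio hu₂ hx0 (hpos2 x hx0.le).ne')
      (fun x hx => by
        have hx0 : 0 < x := lt_trans hT0 hx.1
        have h1 := (hT x hx.1.le).1.1
        have h3 := hcon x hx.1.le
        have h4 := hr₂neg x hx0
        have hq0 : 0 ≤ ((n:ℝ)-1)/x := div_nonneg (by linarith) hx0.le
        have hprod : 0 ≤ (((n:ℝ)-1)/x) * (-(r₂ x)) := mul_nonneg hq0 (by linarith)
        have hsq : 0 < (r₂ x + a) * (a - r₂ x) := mul_pos (by linarith) (by linarith)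
        nlinarith)
    have hlast : r₂ T' < 0 := hr₂neg T' (lt_of_lt_of_le hT0 hTT')
    have hcalc : δ/4 * (T' - T) = 1 - r₂ T := by
      simp only [hT'def, add_sub_cancel_left]
      field_simp
    rw [hcalc] at hgrow
    linarith
  obtain ⟨t₀, ht₀T, ht₀a⟩ := hstepA
  have ht₀pos : 0 < t₀ := lt_of_lt_of_le hT0 ht₀T
  -- Step B : r₁ t₀ < -a
  have hr1t₀ : r₁ t₀ < -a := by
    have hW := wronskian_neg hn hK hu₁ hu₂ ht₀pos
      (fun t ht => hpos1 t ht.1.le) (fun t ht => hpos2 t ht.1.le)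
    have h1 : 0 < u₁ t₀ := hpos1 t₀ ht₀pos.le
    have h2 : 0 < u₂ t₀ := hpos2 t₀ ht₀pos.le
    have hp : (0:ℝ) < t₀^(n-1) := pow_pos ht₀pos _
    have hlt : deriv u₁ t₀ * u₂ t₀ < deriv u₂ t₀ * u₁ t₀ := by nlinarith
    have hlt2 : r₁ t₀ < r₂ t₀ := (div_lt_div_iff₀ h1 h2).mpr hlt
    linarith
  -- per-point derivative bound for (r₁)⁻¹
  have key : ∀ x, T ≤ x → r₁ x ≤ -a →
      HasDerivAt (fun y => (r₁ y)⁻¹)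
        (-((K₁ - C * φ x) - (((n:ℝ)-1)/x) * r₁ x - (r₁ x)^2) / (r₁ x)^2) x ∧
      δ/(4*a^2) ≤ -((K₁ - C * φ x) - (((n:ℝ)-1)/x) * r₁ x - (r₁ x)^2) / (r₁ x)^2 := by
    intro x hx hxa
    have hx0 : 0 < x := lt_of_lt_of_le hT0 hx
    have hune : u₁ x ≠ 0 := (hpos1 x hx0.le).ne'
    have hρneg : r₁ x < 0 := lt_of_le_of_lt hxa (by linarith)
    have hρne : r₁ x ≠ 0 := ne_of_lt hρneg
    have hr := hasDerivAt_ratio hu₁ hx0 hune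
    refine ⟨hr.inv hρne, ?_⟩
    have hq0 : 0 ≤ ((n:ℝ)-1)/x := div_nonneg (by linarith) hx0.le
    have hq4 : (((n:ℝ)-1)/x) * (4*a) ≤ δ := by
      have hlt := (hT x hx).1.2
      have := (lt_div_iff₀ (by positivity : (0:ℝ) < 4*a)).mp hlt
      linarith
    have hφx : 0 ≤ C * φ x := mul_nonneg hC.le (hφ.2.1 x hx0.le).le
    rw [div_le_div_iff₀ (by positivity : (0:ℝ) < 4*a^2) (by positivity : (0:ℝ) < (r₁ x)^2)]
    have hquad : 0 ≤ (-(r₁ x + a)) * (4*a*K₁ - (4*K₁+δ) * r₁ x) := by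
      apply mul_nonneg (by linarith)
      nlinarith
    have hlin : 0 ≤ ((δ - (((n:ℝ)-1)/x) * (4*a)) * (-(r₁ x))) * a := by
      apply mul_nonneg (mul_nonneg (by linarith) (by linarith)) hapos.le
    have hφprod : 0 ≤ (C * φ x) * (4*a^2) := mul_nonneg hφx (by positivity)
    have hsub : 4*a^2*(r₁ x)^2 = (4*K₁+2*δ)*(r₁ x)^2 := by rw [ha2]; ring
    exact ineq1 hquad hlin hφprod hsub
  -- invariance: r₁ stays below -a
  have hr1ne : ∀ t, t₀ ≤ t → r₁ t < -a := by
    intro t htt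
    by_contra hge'
    push_neg at hge'
    set B := {s : ℝ | t₀ ≤ s ∧ -a ≤ r₁ s} with hBdef
    have hBne : B.Nonempty := ⟨t, htt, hge'⟩
    have hBbdd : BddBelow B := ⟨t₀, fun x hx => hx.1⟩
    have hrcont : ContinuousOn r₁ (Ici t₀) := by
      intro s hs
      have hs0 : 0 < s := lt_of_lt_of_le ht₀pos hs
      exact (hasDerivAt_ratio hu₁ hs0 (hpos1 s hs0.le).ne').continuousAt.continuousWithinAt
    have hBcl : IsClosed B := by
      have he : B = Ici t₀ ∩ r₁ ⁻¹' (Ici (-a)) := by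
        ext x; simp [hBdef, mem_Ici]
      rw [he]
      exact hrcont.preimage_isClosed_of_isClosed isClosed_Ici isClosed_Ici
    set s := sInf B with hsdef
    have hsB : s ∈ B := hBcl.csInf_mem hBne hBbdd
    have hst₀ : t₀ < s := by
      rcases eq_or_lt_of_le hsB.1 with heq | h
      · exfalso; rw [← heq] at hsB; exact absurd hsB.2 (not_le.mpr hr1t₀)
      · exact h
    have hlt : ∀ x, t₀ ≤ x → x < s → r₁ x < -a := by
      intro x hx1 hx2
      by_contra h'
      push_neg at h'
      exact absurd (csInf_le hBbdd ⟨hx1, h'⟩) (not_le.mpr hx2)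
    have hs0 : 0 < s := lt_trans ht₀pos hst₀
    have hcs : ContinuousAt r₁ s :=
      (hasDerivAt_ratio hu₁ hs0 (hpos1 s hs0.le).ne').continuousAt
    have hrs_le : r₁ s ≤ -a := by
      have htd : Tendsto r₁ (𝓝[<] s) (𝓝 (r₁ s)) := hcs.tendsto.mono_left nhdsWithin_le_nhds
      refine le_of_tendsto htd ?_
      filter_upwards [Ioo_mem_nhdsLT_of_mem (⟨hst₀, le_rfl⟩ : s ∈ Ioc t₀ s)] with x hx
      exact (hlt x hx.1.le hx.2).le
    have hg := growth (f := fun y => (r₁ y)⁻¹)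
      (f' := fun x => -((K₁ - C * φ x) - (((n:ℝ)-1)/x) * r₁ x - (r₁ x)^2) / (r₁ x)^2)
      (c := 0) hst₀.le
      (by
        apply ContinuousOn.inv₀ (hrcont.mono Icc_subset_Ici_self)
        intro x hx
        have hxle : r₁ x ≤ -a := by
          rcases eq_or_lt_of_le hx.2 with heq | h2
          · rw [heq]; exact hrs_le
          · rcases eq_or_lt_of_le hx.1 with heq1 | h1
            · rw [← heq1]; exact hr1t₀.le
            · exact (hlt x hx.1 h2).le
        exact ne_of_lt (by linarith))
      (fun x hx => (key x (le_trans ht₀T hx.1.le) (hlt x hx.1.le hx.2).le).1)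
      (fun x hx => le_trans (by positivity) (key x (le_trans ht₀T hx.1.le) (hlt x hx.1.le hx.2).le).2)
    simp only [mul_zero, zero_mul, add_zero] at hg
    have hrs : r₁ s = -a := le_antisymm hrs_le hsB.2
    rw [hrs] at hg
    have h1 : (-a)⁻¹ < (r₁ t₀)⁻¹ := by
      have hna : -a < 0 := by linarith
      have ht0neg : r₁ t₀ < 0 := by linarith
      rw [inv_lt_inv_of_neg hna ht0neg]
      exact hr1t₀
    linarith
  -- final contradiction
  set c' := δ/(4*a^2) with hc'def
  have hc'pos : 0 < c' := by positivity
  have hft₀ : (r₁ t₀)⁻¹ < 0 := inv_lt_zero.mpr (by linarith)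
  set tF := t₀ + (1 - (r₁ t₀)⁻¹) / c' with htFdef
  have htF : t₀ ≤ tF := by
    have : 0 < (1 - (r₁ t₀)⁻¹) / c' := by
      apply div_pos (by linarith) hc'pos
    simp only [htFdef]; linarith
  have hg := growth (f := fun y => (r₁ y)⁻¹)
    (f' := fun x => -((K₁ - C * φ x) - (((n:ℝ)-1)/x) * r₁ x - (r₁ x)^2) / (r₁ x)^2)
    (c := c') htF
    (by
      intro x hx
      have hx0 : 0 < x := lt_of_lt_of_le ht₀pos hx.1
      have hxne : r₁ x ≠ 0 := by
        rcases eq_or_lt_of_le hx.1 with heq | h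
        · rw [← heq]; exact ne_of_lt (by linarith)
        · exact ne_of_lt (by linarith [hr1ne x (le_of_lt h)])
      exact (((hasDerivAt_ratio hu₁ hx0 (hpos1 x hx0.le).ne').continuousAt.inv₀ hxne)).continuousWithinAt)
    (fun x hx => (key x (le_trans ht₀T hx.1.le) (hr1ne x hx.1.le).le).1)
    (fun x hx => (key x (le_trans ht₀T hx.1.le) (hr1ne x hx.1.le).le).2)
  have hcalc : c' * (tF - t₀) = 1 - (r₁ t₀)⁻¹ := by
    simp only [htFdef, add_sub_cancel_left]
    rw [mul_comm, div_mul_cancel₀ _ (ne_of_gt hc'pos)]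
  rw [hcalc] at hg
  have hlast : (r₁ tF)⁻¹ < 0 := inv_lt_zero.mpr (by linarith [hr1ne tF htF])
  linarith

set_option maxHeartbeats 1000000 in
lemma part1 (hn : 2 ≤ n) (hC : 0 < C) (hK₁ : 0 < K₁) (hK : K₁ < K₂) (hφ : PhiHyp φ)
    (hKC : K₂ < C * φ 0)
    (hu₁ : ODESol n C K₁ φ u₁) (hu₂ : ODESol n C K₂ φ u₂)
    (h : (∀ t, 0 ≤ t → 0 < u₁ t) ∧ ∃ t, 0 < t ∧ IsLocalMin u₁ t) :
    (∀ t, 0 ≤ t → 0 < u₂ t) ∧ ∃ t, 0 < t ∧ IsLocalMin u₂ t := by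
  obtain ⟨hpos1, -⟩ := h
  have hpos2 : ∀ t, 0 ≤ t → 0 < u₂ t := by
    apply sol_pos hu₂
    intro t ht h0
    obtain ⟨s, hs, hs0⟩ := part2 hn hK hu₁ hu₂ ⟨t, ht, h0⟩
    exact (hpos1 s hs.le).ne' hs0
  refine ⟨hpos2, ?_⟩
  have hNa : ¬ (∀ t, 0 < t → deriv u₂ t < 0) := by
    intro hdec
    obtain ⟨s, hs, h0⟩ := part3 hn hC hK₁ hK hφ hu₁ hu₂ hpos2 hdec
    exact (hpos1 s hs.le).ne' h0
  push_neg at hNa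
  obtain ⟨t₀, ht₀, ht₀'⟩ := hNa
  obtain ⟨η, hη, hdec⟩ := initial_decrease hn hu₂ (hφ.1.continuousOn) hKC
  by_cases hA : ∃ t₁, 0 < t₁ ∧ 0 < deriv u₂ t₁
  · obtain ⟨t₁, ht₁, ht₁p⟩ := hA
    have ht₁η : η ≤ t₁ := by
      by_contra hlt
      push_neg at hlt
      exact absurd (hdec t₁ ⟨ht₁, hlt⟩) (not_lt.mpr ht₁p.le)
    have hsub : Icc (η/2) t₁ ⊆ Ici (0:ℝ) := fun x hx => le_trans (by linarith) hx.1
    obtain ⟨m, hm, hmin⟩ := (isCompact_Icc (a := η/2) (b := t₁)).exists_isMinOn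
      (nonempty_Icc.mpr (by linarith)) (hu₂.1.mono hsub)
    have hsa : StrictAntiOn u₂ (Icc (η/2) (3*η/4)) := by
      apply strictAntiOn_of_deriv_neg (convex_Icc _ _)
      · exact hu₂.1.mono (fun x hx => le_trans (by linarith) hx.1)
      · intro x hx
        rw [interior_Icc] at hx
        exact hdec x ⟨by linarith [hx.1], by linarith [hx.2]⟩
    have h34 : u₂ (3*η/4) < u₂ (η/2) :=
      hsa ⟨le_rfl, by linarith⟩ ⟨by linarith, le_rfl⟩ (by linarith)
    have hy : ∃ y, η/2 < y ∧ y < t₁ ∧ u₂ y < u₂ t₁ := by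
      have hD := sol_hasDerivAt hu₂ ht₁
      have hT := hasDerivAt_iff_tendsto_slope.mp hD
      have hT' : Tendsto (slope u₂ t₁) (𝓝[<] t₁) (𝓝 (deriv u₂ t₁)) :=
        hT.mono_left (nhdsWithin_mono _ fun y hy => ne_of_lt hy)
      have hev : ∀ᶠ y in 𝓝[<] t₁, 0 < slope u₂ t₁ y := hT'.eventually (eventually_gt_nhds ht₁p)
      have hev2 : Ioo (η/2) t₁ ∈ 𝓝[<] t₁ :=
        Ioo_mem_nhdsLT_of_mem ⟨by linarith, le_rfl⟩
      obtain ⟨y, hy1, hy2⟩ := (hev.and (eventually_mem_set.mpr hev2)).exists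
      refine ⟨y, hy2.1, hy2.2, ?_⟩
      rw [slope_def_field] at hy1
      by_contra hge
      push_neg at hge
      have : (u₂ y - u₂ t₁)/(y - t₁) ≤ 0 :=
        div_nonpos_of_nonneg_of_nonpos (by linarith) (by linarith [hy2.2])
      linarith
    obtain ⟨y, hy1, hy2, hy3⟩ := hy
    have hmval1 : u₂ m ≤ u₂ (3*η/4) := hmin ⟨by linarith, by linarith⟩
    have hmval2 : u₂ m ≤ u₂ y := hmin ⟨hy1.le, hy2.le⟩
    have hm1 : η/2 < m := by
      rcases eq_or_lt_of_le hm.1 with heq | h'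
      · exfalso; rw [← heq] at hmval1; linarith
      · exact h'
    have hm2 : m < t₁ := by
      rcases eq_or_lt_of_le hm.2 with heq | h'
      · exfalso; rw [heq] at hmval2; linarith
      · exact h'
    exact ⟨m, by linarith, hmin.isLocalMin (Icc_mem_nhds hm1 hm2)⟩
  · push_neg at hA
    exfalso
    have ht₀0 : deriv u₂ t₀ = 0 := le_antisymm (hA t₀ ht₀) ht₀'
    have hu₂t₀ : 0 < u₂ t₀ := hpos2 t₀ ht₀.le
    have hode := sol_ode hu₂ ht₀
    have hDD : deriv (deriv u₂) t₀ = -(C * φ t₀ - K₂) * u₂ t₀ := by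
      rw [hode, ht₀0]; ring
    rcases lt_trichotomy (C * φ t₀ - K₂) 0 with hPneg | hPz | hPpos
    · -- u₂''(t₀) > 0 : deriv u₂ becomes positive right of t₀
      have hposD : 0 < deriv (deriv u₂) t₀ := by
        rw [hDD]; exact mul_pos (by linarith) hu₂t₀
      have hD2 := sol_hasDerivAt2 hu₂ ht₀
      have hT := hasDerivAt_iff_tendsto_slope.mp hD2
      have hT' : Tendsto (slope (deriv u₂) t₀) (𝓝[>] t₀) (𝓝 (deriv (deriv u₂) t₀)) :=
        hT.mono_left (nhdsWithin_mono _ fun y hy => ne_of_gt hy)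
      have hev := hT'.eventually (eventually_gt_nhds hposD)
      obtain ⟨y, hy1, hy2⟩ := (hev.and self_mem_nhdsWithin).exists
      rw [slope_def_field, ht₀0, sub_zero] at hy1
      have hyt : t₀ < y := hy2
      have : 0 < deriv u₂ y := by
        rcases div_pos_iff.mp hy1 with ⟨h1, _⟩ | ⟨_, h2⟩
        · exact h1
        · linarith
      exact absurd this (not_lt.mpr (hA y (lt_trans ht₀ hyt)))
    · -- degenerate case : use the third derivative
      have hφd : HasDerivAt φ (deriv φ t₀) t₀ := by
        have hdiff : DifferentiableOn ℝ φ (Ici 0) := hφ.1.differentiableOn one_ne_zero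
        have hmem : Ici (0:ℝ) ∈ 𝓝 t₀ :=
          mem_of_superset (isOpen_Ioi.mem_nhds ht₀) Ioi_subset_Ici_self
        exact (hdiff.differentiableAt hmem).hasDerivAt
      have hq : HasDerivAt (fun t : ℝ => ((n:ℝ)-1)/t) (-(((n:ℝ)-1)/t₀^2)) t₀ := by
        have h0 : HasDerivAt (fun y : ℝ => ((n:ℝ)-1) * y⁻¹) _ t₀ :=
          (hasDerivAt_inv (ne_of_gt ht₀)).const_mul ((n:ℝ)-1)
        simp only [div_eq_mul_inv]
        convert h0 using 1
        ring
      have hu' := sol_hasDerivAt hu₂ ht₀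
      have hu'' := sol_hasDerivAt2 hu₂ ht₀
      have hDD0 : deriv (deriv u₂) t₀ = 0 := by rw [hDD, hPz]; ring
      have hh : HasDerivAt (fun t => -(((n:ℝ)-1)/t) * deriv u₂ t - (C * φ t - K₂) * u₂ t)
          (-(C * deriv φ t₀ * u₂ t₀)) t₀ := by
        have h1 := (hq.neg.mul hu'')
        have h2 := (((hφd.const_mul C).sub_const K₂).mul hu')
        have h3 : HasDerivAt (fun t => -(((n:ℝ)-1)/t) * deriv u₂ t - (C * φ t - K₂) * u₂ t) _ t₀ :=
            h1.sub h2
        convert h3 using 1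
        rw [ht₀0, hDD0, hPz]
        ring
      have hposH : 0 < -(C * deriv φ t₀ * u₂ t₀) := by
        have hφ' := hφ.2.2.1 t₀ ht₀
        have : C * deriv φ t₀ * u₂ t₀ < 0 :=
          mul_neg_of_neg_of_pos (mul_neg_of_pos_of_neg hC hφ') hu₂t₀
        linarith
      have hh0 : -(((n:ℝ)-1)/t₀) * deriv u₂ t₀ - (C * φ t₀ - K₂) * u₂ t₀ = 0 := by
        rw [ht₀0, hPz]; ring
      have hT := hasDerivAt_iff_tendsto_slope.mp hh
      have hT' : Tendsto (slope (fun t => -(((n:ℝ)-1)/t) * deriv u₂ t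
          - (C * φ t - K₂) * u₂ t) t₀) (𝓝[>] t₀) (𝓝 (-(C * deriv φ t₀ * u₂ t₀))) :=
        hT.mono_left (nhdsWithin_mono t₀ (fun y hy => ne_of_gt hy))
      have hev := hT'.eventually (eventually_gt_nhds hposH)
      have heq : ∀ᶠ t in 𝓝[>] t₀,
          deriv (deriv u₂) t = -(((n:ℝ)-1)/t) * deriv u₂ t - (C * φ t - K₂) * u₂ t := by
        filter_upwards [self_mem_nhdsWithin] with t ht
        exact sol_ode hu₂ (lt_trans ht₀ ht)
      have hev2 : ∀ᶠ t in 𝓝[>] t₀, 0 < deriv (deriv u₂) t := by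
        filter_upwards [hev, heq, self_mem_nhdsWithin] with t h1 h2 h3
        rw [slope_def_field, hh0, sub_zero] at h1
        rw [h2]
        rcases div_pos_iff.mp h1 with ⟨hp, _⟩ | ⟨_, hneg2⟩
        · exact hp
        · have : t₀ < t := h3
          linarith
      obtain ⟨c, hc, hsubc⟩ := mem_nhdsGT_iff_exists_Ioo_subset.mp hev2
      set sm := (t₀ + c)/2 with hsmdef
      have hsm1 : t₀ < sm := by
        have : t₀ < c := hc
        simp only [hsmdef]; linarith
      have hsm2 : sm < c := by
        have : t₀ < c := hc
        simp only [hsmdef]; linarith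
      have hmono : StrictMonoOn (deriv u₂) (Icc t₀ sm) := by
        apply strictMonoOn_of_deriv_pos (convex_Icc _ _)
        · exact (sol_cont_deriv hu₂).mono (fun x hx => lt_of_lt_of_le ht₀ hx.1)
        · intro x hx
          rw [interior_Icc] at hx
          exact hsubc ⟨hx.1, lt_trans hx.2 hsm2⟩
      have := hmono ⟨le_rfl, hsm1.le⟩ ⟨hsm1.le, le_rfl⟩ hsm1
      rw [ht₀0] at this
      exact absurd this (not_lt.mpr (hA sm (lt_trans ht₀ hsm1)))
    · -- u₂''(t₀) < 0 : deriv u₂ positive left of t₀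
      have hnegD : deriv (deriv u₂) t₀ < 0 := by
        rw [hDD]
        exact mul_neg_of_neg_of_pos (by linarith) hu₂t₀
      have hD2 := sol_hasDerivAt2 hu₂ ht₀
      have hT := hasDerivAt_iff_tendsto_slope.mp hD2
      have hT' : Tendsto (slope (deriv u₂) t₀) (𝓝[<] t₀) (𝓝 (deriv (deriv u₂) t₀)) :=
        hT.mono_left (nhdsWithin_mono _ fun y hy => ne_of_lt hy)
      have hev := hT'.eventually (eventually_lt_nhds hnegD)
      have hev2 : Ioo (0:ℝ) t₀ ∈ 𝓝[<] t₀ := Ioo_mem_nhdsLT_of_mem ⟨ht₀, le_rfl⟩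
      obtain ⟨y, hy1, hy2⟩ := (hev.and (eventually_mem_set.mpr hev2)).exists
      rw [slope_def_field, ht₀0, sub_zero] at hy1
      have : 0 < deriv u₂ y := by
        rcases div_neg_iff.mp hy1 with ⟨h1, _⟩ | ⟨_, h2⟩
        · exact h1
        · linarith [hy2.2]
      exact absurd this (not_lt.mpr (hA y hy2.1))

end ODEcmp

/-- comparison of cases for different constants `K₁ < K₂`.
Let `0 < K₁ < K₂ < C·φ(0)`, `u₁` solve the ODE with constant `K₁` and `u₂` with `K₂`,
both with `u(0) = 1`, `u'(0⁺) = 0`. Then: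
(i) if `u₁` satisfies case (c) then `u₂` satisfies case (c);
(ii) if `u₂` vanishes at some `t > 0` then so does `u₁`;
(iii) if `u₂` satisfies case (a), then `u₁` vanishes at some `t > 0`. -/
theorem ODE_case_comparison {n : ℕ} (hn : 2 ≤ n) (C K₁ K₂ : ℝ) (hC : 0 < C)
    (hK₁ : 0 < K₁) (hK : K₁ < K₂)
    (φ : ℝ → ℝ) (hφ : PhiHyp φ) (hKC : K₂ < C * φ 0)
    (u₁ u₂ : ℝ → ℝ) (hu₁ : ODESol n C K₁ φ u₁) (hu₂ : ODESol n C K₂ φ u₂) :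
    ((((∀ t : ℝ, 0 ≤ t → 0 < u₁ t) ∧ ∃ t : ℝ, 0 < t ∧ IsLocalMin u₁ t) →
        ((∀ t : ℝ, 0 ≤ t → 0 < u₂ t) ∧ ∃ t : ℝ, 0 < t ∧ IsLocalMin u₂ t))) ∧
    ((∃ t : ℝ, 0 < t ∧ u₂ t = 0) → (∃ t : ℝ, 0 < t ∧ u₁ t = 0)) ∧
    ((((∀ t : ℝ, 0 ≤ t → 0 < u₂ t) ∧ ∀ t : ℝ, 0 < t → deriv u₂ t < 0)) →
      (∃ t : ℝ, 0 < t ∧ u₁ t = 0)) :=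
  ⟨fun h => ODEcmp.part1 hn hC hK₁ hK hφ hKC hu₁ hu₂ h,
   fun h => ODEcmp.part2 hn hK hu₁ hu₂ h,
   fun h => ODEcmp.part3 hn hC hK₁ hK hφ hu₁ hu₂ h.1 h.2⟩
end
end
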